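/- Let e > 0, mᵢ > 0, mₑ > 0 be constants, and let n : ℝ × ℝ³ → ℝ be a positive, continuously differentiable number density, uᵢ, uₑ, 𝐄, 𝐁 : ℝ × ℝ³ → ℝ³ continuously differentiable vector fields, and ℙᵢ, ℙₑ : ℝ × ℝ³ → ℝ³ˣ³ continuously differentiable tensor fields. Suppose the collisionless momentum balance equations hold for both species: ∂ₜ(mₛ n uₛ) + ∇·(mₛ n uₛ⊗uₛ + ℙₛ) = qₛ n (𝐄 + uₛ×𝐁) for s ∈ {i, e}, with qᵢ = e and qₑ = −e. Define ρ = n(mᵢ+mₑ), 𝐮 = (mᵢuᵢ + mₑuₑ)/(mᵢ+mₑ), 𝐉 = n e (uᵢ − uₑ), m̃ᵢ = mᵢ/e, m̃ₑ = mₑ/e. Then the generalized Ohm's law holds pointwise: 𝐄 = 𝐁×𝐮 + ((m̃ᵢ − m̃ₑ)/ρ) 𝐉×𝐁 + (1/ρ) ∇·(m̃ₑℙᵢ − m̃ᵢℙₑ) + (m̃ᵢm̃ₑ/ρ) ( ∂ₜ𝐉 + ∇·( 𝐮⊗𝐉 + 𝐉⊗𝐮 + ((m̃ₑ − m̃ᵢ)/ρ)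 𝐉⊗𝐉 ) ). -/

import Mathlib

/-!
Multiply the ion momentum equation by `e / mᵢ`, the electron one by `e / mₑ`, and subtract.
Since `J = (e / mᵢ) (mᵢ n uᵢ) - (e / mₑ) (mₑ n uₑ)`, the time derivatives combine into `∂ₜJ`;
pointwise algebra shows that the combined momentum flux is the inertial tensor
`u⊗J + J⊗u + ((m̃ₑ - m̃ᵢ)/ρ) J⊗J` plus `(e² / (mᵢ mₑ)) (m̃ₑℙᵢ - m̃ᵢℙₑ)`, so linearity of `∂ₜ` and
`∇·` gives an equation for `∂ₜJ + ∇·(…)`. In it `E` appears with coefficient `e² n (1/mᵢ + 1/mₑ)`,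
and solving for `E` is linear algebra with the cross product.
-/

noncomputable section

def sb (i : Fin 3) : Fin 3 → ℝ := Pi.single i 1

def pt3 {E : Type*} [NormedAddCommGroup E] [NormedSpace ℝ E]
    (f : ℝ × (Fin 3 → ℝ) → E) (p : ℝ × (Fin 3 → ℝ)) : E :=
  fderiv ℝ f p (1, 0)

def pd3 {E : Type*} [NormedAddCommGroup E] [NormedSpace ℝ E]
    (i : Fin 3) (f : ℝ × (Fin 3 → ℝ) → E) (p : ℝ × (Fin 3 → ℝ)) : E :=
  fderiv ℝ f p (0, sb i)

def div3 (F : ℝ × (Fin 3 → ℝ) → (Fin 3 → ℝ)) (p : ℝ × (Fin 3 → ℝ)) : ℝ :=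
  ∑ i, pd3 i (fun q => F q i) p

def curl3 (F : ℝ × (Fin 3 → ℝ) → (Fin 3 → ℝ)) (p : ℝ × (Fin 3 → ℝ)) : Fin 3 → ℝ :=
  ![pd3 1 (fun q => F q 2) p - pd3 2 (fun q => F q 1) p,
    pd3 2 (fun q => F q 0) p - pd3 0 (fun q => F q 2) p,
    pd3 0 (fun q => F q 1) p - pd3 1 (fun q => F q 0) p]

def grad3 (f : ℝ × (Fin 3 → ℝ) → ℝ) (p : ℝ × (Fin 3 → ℝ)) : Fin 3 → ℝ :=
  fun i => pd3 i f p

def lap3 (f : ℝ × (Fin 3 → ℝ) → ℝ) (p : ℝ × (Fin 3 → ℝ)) : ℝ :=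
  ∑ i, pd3 i (fun q => pd3 i f q) p

def tdiv3 (T : ℝ × (Fin 3 → ℝ) → Fin 3 → Fin 3 → ℝ)
    (p : ℝ × (Fin 3 → ℝ)) : Fin 3 → ℝ :=
  fun i => ∑ j, pd3 j (fun q => T q j i) p

section SpacetimeDerivatives

variable {F : Type*} [NormedAddCommGroup F] [NormedSpace ℝ F]
  {f g : ℝ × (Fin 3 → ℝ) → F} {p : ℝ × (Fin 3 → ℝ)}

theorem pt3_sub (hf : DifferentiableAt ℝ f p) (hg : DifferentiableAt ℝ g p) :
    pt3 (f - g) p = pt3 f p - pt3 g p := by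
  simp [pt3, fderiv_sub hf hg]

theorem pt3_const_smul (c : ℝ) (hf : DifferentiableAt ℝ f p) :
    pt3 (c • f) p = c • pt3 f p := by
  simp [pt3, fderiv_const_smul hf]

theorem pd3_sub (i : Fin 3) (hf : DifferentiableAt ℝ f p) (hg : DifferentiableAt ℝ g p) :
    pd3 i (f - g) p = pd3 i f p - pd3 i g p := by
  simp [pd3, fderiv_sub hf hg]

theorem pd3_const_smul (i : Fin 3) (c : ℝ) (hf : DifferentiableAt ℝ f p) :
    pd3 i (c • f) p = c • pd3 i f p := by
  simp [pd3, fderiv_const_smul hf]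

theorem pd3_apply {ι : Type*} [Fintype ι] {Φ : ℝ × (Fin 3 → ℝ) → ι → F}
    (i : Fin 3) (hΦ : DifferentiableAt ℝ Φ p) (a : ι) :
    pd3 i (fun q => Φ q a) p = pd3 i Φ p a := by
  simp [pd3, fderiv_apply hΦ]

end SpacetimeDerivatives

section TensorDivergence

variable {S T : ℝ × (Fin 3 → ℝ) → Fin 3 → Fin 3 → ℝ} {p : ℝ × (Fin 3 → ℝ)}

theorem tdiv3_eq_sum (hT : DifferentiableAt ℝ T p) :
    tdiv3 T p = fun k => ∑ j, pd3 j T p j k := by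
  ext k
  refine Finset.sum_congr rfl fun j _ => ?_
  rw [pd3_apply j (differentiableAt_pi.1 hT j), pd3_apply j hT]

theorem tdiv3_sub (hS : DifferentiableAt ℝ S p) (hT : DifferentiableAt ℝ T p) :
    tdiv3 (S - T) p = tdiv3 S p - tdiv3 T p := by
  ext k
  simp [tdiv3_eq_sum (hS.sub hT), tdiv3_eq_sum hS, tdiv3_eq_sum hT, pd3_sub _ hS hT]

theorem tdiv3_const_smul (c : ℝ) (hT : DifferentiableAt ℝ T p) :
    tdiv3 (c • T) p = c • tdiv3 T p := by
  ext k
  simp [tdiv3_eq_sum (hT.const_smul c), tdiv3_eq_sum hT, pd3_const_smul _ c hT, Finset.mul_sum]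

theorem pt3_add_tdiv3_linear_combination {M₁ M₂ : ℝ × (Fin 3 → ℝ) → Fin 3 → ℝ}
    {R : ℝ × (Fin 3 → ℝ) → Fin 3 → Fin 3 → ℝ} (hM₁ : DifferentiableAt ℝ M₁ p)
    (hM₂ : DifferentiableAt ℝ M₂ p) (hS : DifferentiableAt ℝ S p) (hT : DifferentiableAt ℝ T p)
    (hR : DifferentiableAt ℝ R p) (a b c : ℝ) :
    pt3 (a • M₁ - b • M₂) p + tdiv3 (a • S - b • T - c • R) p
      = a • (pt3 M₁ p + tdiv3 S p) - b • (pt3 M₂ p + tdiv3 T p) - c • tdiv3 R p := by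
  rw [pt3_sub (hM₁.const_smul a) (hM₂.const_smul b), pt3_const_smul a hM₁, pt3_const_smul b hM₂,
    tdiv3_sub ((hS.const_smul a).sub (hT.const_smul b)) (hR.const_smul c),
    tdiv3_sub (hS.const_smul a) (hT.const_smul b),
    tdiv3_const_smul a hS, tdiv3_const_smul b hT, tdiv3_const_smul c hR]
  module

end TensorDivergence

theorem electric_field_eq_of_current_balance {e mi me n ρ : ℝ}
    (he : e ≠ 0) (hmi : mi ≠ 0) (hme : me ≠ 0) (hm : mi + me ≠ 0) (hn : n ≠ 0)
    {E B ui ue u J D dJ : Fin 3 → ℝ} (hρ : ρ = n * (mi + me))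
    (hu : u = (mi + me)⁻¹ • (mi • ui + me • ue)) (hJ : J = (n * e) • (ui - ue))
    (hdJ : dJ = (e / mi) • ((e * n) • (E + crossProduct ui B))
      - (e / me) • ((-e * n) • (E + crossProduct ue B)) - (e * e / (mi * me)) • D) :
    E = crossProduct B u + ((mi / e - me / e) / ρ) • crossProduct J B + ρ⁻¹ • D
      + ((mi / e) * (me / e) / ρ) • dJ := by
  subst hρ hu hJ hdJ
  rw [← cross_anticomm _ B]
  simp only [map_add, map_sub, map_smul, LinearMap.add_apply, LinearMap.sub_apply,
    LinearMap.smul_apply]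
  match_scalars <;> field_simp <;> ring

theorem generalized_ohms_law_general
    (e mi me : ℝ) (he : 0 < e) (hmi : 0 < mi) (hme : 0 < me)
    (n : ℝ × (Fin 3 → ℝ) → ℝ) (hn_pos : ∀ p, 0 < n p) (hn : ContDiff ℝ 1 n)
    (ui ue E B : ℝ × (Fin 3 → ℝ) → (Fin 3 → ℝ))
    (hui : ContDiff ℝ 1 ui) (hue : ContDiff ℝ 1 ue)
    (Ppi Ppe : ℝ × (Fin 3 → ℝ) → Fin 3 → Fin 3 → ℝ)
    (hPpi : ContDiff ℝ 1 Ppi) (hPpe : ContDiff ℝ 1 Ppe)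
    (mom_i : ∀ p, pt3 (fun q => (mi * n q) • ui q) p
        + tdiv3 (fun q => fun j k => mi * n q * ui q j * ui q k + Ppi q j k) p
        = (e * n p) • (E p + crossProduct (ui p) (B p)))
    (mom_e : ∀ p, pt3 (fun q => (me * n q) • ue q) p
        + tdiv3 (fun q => fun j k => me * n q * ue q j * ue q k + Ppe q j k) p
        = (-e * n p) • (E p + crossProduct (ue p) (B p)))
    (ρ : ℝ × (Fin 3 → ℝ) → ℝ) (hρ : ∀ p, ρ p = n p * (mi + me))
    (u J : ℝ × (Fin 3 → ℝ) → (Fin 3 → ℝ))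
    (hu : ∀ p, u p = (mi + me)⁻¹ • (mi • ui p + me • ue p))
    (hJ : ∀ p, J p = (n p * e) • (ui p - ue p)) :
    ∀ p, E p
      = crossProduct (B p) (u p)
        + ((mi / e - me / e) / ρ p) • crossProduct (J p) (B p)
        + (ρ p)⁻¹ •
            tdiv3 (fun q => fun j k => (me / e) * Ppi q j k - (mi / e) * Ppe q j k) p
        + (((mi / e) * (me / e)) / ρ p) •
            (pt3 J p
              + tdiv3 (fun q => fun j k => u q j * J q k + J q j * u q k
                  + ((me / e - mi / e) / ρ q) * (J q j * J q k)) p) := by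
  intro p
  set Mi := fun q => (mi * n q) • ui q
  set Me := fun q => (me * n q) • ue q
  set Ti := fun q => fun j k => mi * n q * ui q j * ui q k + Ppi q j k
  set Te := fun q => fun j k => me * n q * ue q j * ue q k + Ppe q j k
  set Pc := fun q => fun j k => (me / e) * Ppi q j k - (mi / e) * Ppe q j k
  have hJ_momenta : J = (e / mi) • Mi - (e / me) • Me := by
    funext q
    simp only [hJ, Mi, Me, Pi.sub_apply, Pi.smul_apply, smul_smul, smul_sub]
    congr 2 <;> field_simp
  have hflux : (fun q => fun j k => u q j * J q k + J q j * u q k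
      + ((me / e - mi / e) / ρ q) * (J q j * J q k))
      = (e / mi) • Ti - (e / me) • Te - (e * e / (mi * me)) • Pc := by
    funext q j k
    have hnq := (hn_pos q).ne'
    simp only [hu, hJ, hρ, Ti, Te, Pc, Pi.add_apply, Pi.sub_apply, Pi.smul_apply, smul_eq_mul]
    field_simp
    ring
  have hn' := hn.differentiable one_ne_zero
  have hui' := hui.differentiable one_ne_zero
  have hue' := hue.differentiable one_ne_zero
  have hPpi' := hPpi.differentiable one_ne_zero
  have hPpe' := hPpe.differentiable one_ne_zero
  have hMi : DifferentiableAt ℝ Mi p := by fun_prop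
  have hMe : DifferentiableAt ℝ Me p := by fun_prop
  have hTi : DifferentiableAt ℝ Ti p := by fun_prop
  have hTe : DifferentiableAt ℝ Te p := by fun_prop
  have hPc : DifferentiableAt ℝ Pc p := by fun_prop
  have hcurrent := pt3_add_tdiv3_linear_combination hMi hMe hTi hTe hPc
    (e / mi) (e / me) (e * e / (mi * me))
  rw [← hJ_momenta, ← hflux, mom_i, mom_e] at hcurrent
  exact electric_field_eq_of_current_balance he.ne' hmi.ne' hme.ne' (by positivity)
    (hn_pos p).ne' (hρ p) (hu p) (hJ p) hcurrent

/-- **The collisionless generalized Ohm's law.**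
For a quasineutral two-species plasma (common number density `n`, charges
`qᵢ = e`, `qₑ = −e`) whose species satisfy the collisionless momentum balance
`∂ₜ(mₛnuₛ) + ∇·(mₛnuₛ⊗uₛ + ℙₛ) = qₛn(𝐄 + uₛ×𝐁)`, the electric field satisfies
`𝐄 = 𝐁×𝐮 + ((m̃ᵢ−m̃ₑ)/ρ)𝐉×𝐁 + (1/ρ)∇·(m̃ₑℙᵢ − m̃ᵢℙₑ)
   + (m̃ᵢm̃ₑ/ρ)(∂ₜ𝐉 + ∇·(𝐮⊗𝐉 + 𝐉⊗𝐮 + ((m̃ₑ−m̃ᵢ)/ρ)𝐉⊗𝐉))`,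
where `ρ = n(mᵢ+mₑ)`, `𝐮 = (mᵢuᵢ+mₑuₑ)/(mᵢ+mₑ)`, `𝐉 = ne(uᵢ−uₑ)`, `m̃ₛ = mₛ/e`. -/
theorem generalized_ohms_law
    (e mi me : ℝ) (he : 0 < e) (hmi : 0 < mi) (hme : 0 < me)
    (n : ℝ × (Fin 3 → ℝ) → ℝ) (hn_pos : ∀ p, 0 < n p) (hn : ContDiff ℝ 1 n)
    (ui ue E B : ℝ × (Fin 3 → ℝ) → (Fin 3 → ℝ))
    (hui : ContDiff ℝ 1 ui) (hue : ContDiff ℝ 1 ue)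
    (hE : ContDiff ℝ 1 E) (hB : ContDiff ℝ 1 B)
    (Ppi Ppe : ℝ × (Fin 3 → ℝ) → Fin 3 → Fin 3 → ℝ)
    (hPpi : ContDiff ℝ 1 Ppi) (hPpe : ContDiff ℝ 1 Ppe)
    (mom_i : ∀ p, pt3 (fun q => (mi * n q) • ui q) p
        + tdiv3 (fun q => fun j k => mi * n q * ui q j * ui q k + Ppi q j k) p
        = (e * n p) • (E p + crossProduct (ui p) (B p)))
    (mom_e : ∀ p, pt3 (fun q => (me * n q) • ue q) p
        + tdiv3 (fun q => fun j k => me * n q * ue q j * ue q k + Ppe q j k) p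
        = (-e * n p) • (E p + crossProduct (ue p) (B p)))
    (ρ : ℝ × (Fin 3 → ℝ) → ℝ) (hρ : ∀ p, ρ p = n p * (mi + me))
    (u J : ℝ × (Fin 3 → ℝ) → (Fin 3 → ℝ))
    (hu : ∀ p, u p = (mi + me)⁻¹ • (mi • ui p + me • ue p))
    (hJ : ∀ p, J p = (n p * e) • (ui p - ue p)) :
    ∀ p, E p
      = crossProduct (B p) (u p)
        + ((mi / e - me / e) / ρ p) • crossProduct (J p) (B p)
        + (ρ p)⁻¹ •
            tdiv3 (fun q => fun j k => (me / e) * Ppi q j k - (mi / e) * Ppe q j k) p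
        + (((mi / e) * (me / e)) / ρ p) •
            (pt3 J p
              + tdiv3 (fun q => fun j k => u q j * J q k + J q j * u q k
                  + ((me / e - mi / e) / ρ q) * (J q j * J q k)) p) :=
  generalized_ohms_law_general e mi me he hmi hme n hn_pos hn ui ue E B hui hue Ppi Ppe hPpi hPpe
    mom_i mom_e ρ hρ u J hu hJ
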